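/- For every pair of functions g: {0,...,N} → ℝ and φ: {0,...,N-1} → ℝ with φ strictly positive, and for every j ∈ {1,...,N-2}, the identity Ω*( (∇_N^+ g)/φ )(j) - (∇_N^+ g)(j) · (Ωφ)(j)/φ(j)^2 = [∇_N^+ (A_φ g)](j)/φ(j) holds, where Ω is the generator acting in the bulk as (Ωf)(j) = (Δ_N f)(j) - E(∇_N^- f)(j), Ω* its adjoint acting in the bulk as (Ω*f)(j) = (Δ_N f)(j) + E(∇_N^+ f)(j), and A_φ is the operator (A_φ g)(j) = (Δ_N g)(j) + E·(1-θ_φ(j))/(1+(E/N)θ_φ(j))·(∇_N^+ g)(j) - E·θ_φ(j)·(∇_N^- g)(j), with θ_φ(j) = (∇_N^- φ)(j)/(E φ(j-1)). -/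
import Mathlib


/-- Discrete forward gradient `(∇_N^+ f)(j) = N(f(j+1)-f(j))`. -/
def gradP (N : ℕ) (f : ℕ → ℝ) (j : ℕ) : ℝ := N * (f (j + 1) - f j)

/-- Discrete backward gradient `(∇_N^- f)(j) = N(f(j)-f(j-1))`. -/
def gradM (N : ℕ) (f : ℕ → ℝ) (j : ℕ) : ℝ := N * (f j - f (j - 1))

/-- Discrete Laplacian `(Δ_N f)(j) = N²(f(j+1)+f(j-1)-2f(j))`. -/
def lapN (N : ℕ) (f : ℕ → ℝ) (j : ℕ) : ℝ := (N : ℝ) ^ 2 * (f (j + 1) + f (j - 1) - 2 * f j)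

/-- the discrete Cole–Hopf conjugation identity
`Ω*((∇⁺g)/φ)(j) - (∇⁺g)(j)(Ωφ)(j)/φ(j)² = [∇⁺(A_φ g)](j)/φ(j)` at interior points. -/
theorem stmt3 (N : ℕ) (hN : 4 ≤ N) (E : ℝ) (hE : 0 < E)
    (g φ : ℕ → ℝ) (hφ : ∀ j, 0 < φ j)
    (θ : ℕ → ℝ) (hθ : ∀ i, θ i = gradM N φ i / (E * φ (i - 1)))
    (Aφ : ℕ → ℝ)
    (hA : ∀ i, Aφ i = lapN N g i + E * ((1 - θ i) / (1 + (E / N) * θ i)) * gradP N g i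
        - E * θ i * gradM N g i)
    (j : ℕ) (hj1 : 1 ≤ j) (hj2 : j ≤ N - 2) :
    (lapN N (fun i => gradP N g i / φ i) j + E * gradP N (fun i => gradP N g i / φ i) j)
        - gradP N g j * (lapN N φ j - E * gradM N φ j) / (φ j) ^ 2
      = (N : ℝ) * (Aφ (j + 1) - Aφ j) / φ j := by
  obtain ⟨m, rfl⟩ : ∃ m, j = m + 1 := ⟨j - 1, (Nat.succ_pred_eq_of_pos hj1).symm⟩
  have hN0 : (N : ℝ) ≠ 0 := by positivity
  have hE0 : E ≠ 0 := ne_of_gt hE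
  have key : ∀ i : ℕ, 1 + (E / N) * θ (i + 1) = φ (i + 1) / φ i := by
    intro i
    rw [hθ]
    simp only [gradM, Nat.add_sub_cancel]
    have hpi := (hφ i).ne'
    field_simp
    ring
  rw [hA, hA, key (m + 1), key m, hθ, hθ]
  simp only [gradP, gradM, lapN, Nat.add_sub_cancel]
  have h0 := (hφ m).ne'
  have h1 := (hφ (m + 1)).ne'
  have h2 := (hφ (m + 1 + 1)).ne'
  have h3 := (hφ (m + 1 + 1 + 1)).ne'
  field_simp
  ring
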